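/- The Bayes error of the temperature-τ Gaussian model is monotonically nondecreasing in τ: for 0 < τ ≤ τ′, E_Bayes(τ) ≤ E_Bayes(τ′), where E_Bayes(τ) = 1 − Σ_k π_k ∫ ∏_{j≠k} 1{ãⱼₖᵀ z + b̃ⱼₖ/τ > 0} dN(z; 0, I) with b̃ⱼₖ = (μ_k−μ_j)ᵀΣ^{-1}(μ_k−μ_j) ≥ 0. -/

import Mathlib

open MeasureTheory ProbabilityTheory Matrix

/-! Every `b̃ⱼₖ` is a value of the positive definite form `Σ⁻¹`, hence nonnegative, so `b̃ⱼₖ / τ`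
decreases in `τ`. Each acceptance region therefore shrinks as `τ` grows, and so does the
probability of correct classification `Σ_k π_k N(0, I)(region_k)`. -/

theorem add_div_pos_of_le_of_add_div_pos {a b τ τ' : ℝ} (hb : 0 ≤ b) (hτ : 0 < τ)
    (hττ' : τ ≤ τ') (h : 0 < a + b / τ') : 0 < a + b / τ := by
  have : b / τ' ≤ b / τ := div_le_div_of_nonneg_left hb hτ hττ'
  linarith

theorem one_sub_sum_mul_measure_toReal_le_of_subset {Ω ι : Type*} [MeasurableSpace Ω]
    [Fintype ι] {μ : Measure Ω} [IsFiniteMeasure μ] {w : ι → ℝ} (hw : ∀ i, 0 ≤ w i)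
    {s t : ι → Set Ω} (hts : ∀ i, t i ⊆ s i) :
    1 - ∑ i, w i * (μ (s i)).toReal ≤ 1 - ∑ i, w i * (μ (t i)).toReal := by
  gcongr with i
  · exact hw i
  · exact measure_ne_top μ (s i)
  · exact hts i

theorem bayes_error_monotone_in_temperature_general
    (d K : ℕ) (μ : Fin K → (Fin d → ℝ)) (π : Fin K → ℝ)
    (hπ : ∀ k, 0 ≤ π k)
    (S B : Matrix (Fin d) (Fin d) ℝ) (hS : S.PosDef)
    (τ τ' : ℝ) (hτ : 0 < τ) (hττ' : τ ≤ τ') :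
    (fun t : ℝ => 1 - ∑ k, π k *
        ((Measure.pi fun _ : Fin d => gaussianReal 0 1)
          {z : Fin d → ℝ | ∀ j : Fin K, j ≠ k →
            ((2 : ℝ) • (B *ᵥ (μ k - μ j))) ⬝ᵥ z
              + ((μ k - μ j) ⬝ᵥ (S⁻¹ *ᵥ (μ k - μ j))) / t > 0}).toReal) τ
      ≤ (fun t : ℝ => 1 - ∑ k, π k *
        ((Measure.pi fun _ : Fin d => gaussianReal 0 1)
          {z : Fin d → ℝ | ∀ j : Fin K, j ≠ k →
            ((2 : ℝ) • (B *ᵥ (μ k - μ j))) ⬝ᵥ z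
              + ((μ k - μ j) ⬝ᵥ (S⁻¹ *ᵥ (μ k - μ j))) / t > 0}).toReal) τ' := by
  refine one_sub_sum_mul_measure_toReal_le_of_subset hπ fun k z hz j hj => ?_
  exact add_div_pos_of_le_of_add_div_pos
    (hS.inv.posSemidef.re_dotProduct_nonneg (μ k - μ j)) hτ hττ' (hz j hj)

/-- The Bayes error of the temperature-`τ` Gaussian model
`E(τ) = 1 − Σ_k π_k ∫ ∏_{j≠k} 1{ãⱼₖᵀ z + b̃ⱼₖ/τ > 0} dN(z; 0, I)`, with
`ãⱼₖ = 2 Σ^{-1/2}(μ_k − μ_j)` and `b̃ⱼₖ = (μ_k − μ_j)ᵀ Σ⁻¹ (μ_k − μ_j) ≥ 0`, is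
monotonically nondecreasing in `τ`. -/
theorem bayes_error_monotone_in_temperature
    (d K : ℕ) (μ : Fin K → (Fin d → ℝ)) (π : Fin K → ℝ)
    (hπ : ∀ k, 0 ≤ π k) (hπsum : ∑ k, π k = 1)
    (S B : Matrix (Fin d) (Fin d) ℝ) (hS : S.PosDef) (hB : B.PosDef)
    (hBsq : B * B = S⁻¹)
    (τ τ' : ℝ) (hτ : 0 < τ) (hττ' : τ ≤ τ') :
    (fun t : ℝ => 1 - ∑ k, π k *
        ((Measure.pi fun _ : Fin d => gaussianReal 0 1)
          {z : Fin d → ℝ | ∀ j : Fin K, j ≠ k →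
            ((2 : ℝ) • (B *ᵥ (μ k - μ j))) ⬝ᵥ z
              + ((μ k - μ j) ⬝ᵥ (S⁻¹ *ᵥ (μ k - μ j))) / t > 0}).toReal) τ
      ≤ (fun t : ℝ => 1 - ∑ k, π k *
        ((Measure.pi fun _ : Fin d => gaussianReal 0 1)
          {z : Fin d → ℝ | ∀ j : Fin K, j ≠ k →
            ((2 : ℝ) • (B *ᵥ (μ k - μ j))) ⬝ᵥ z
              + ((μ k - μ j) ⬝ᵥ (S⁻¹ *ᵥ (μ k - μ j))) / t > 0}).toReal) τ' :=
  bayes_error_monotone_in_temperature_general d K μ π hπ S B hS τ τ' hτ hττ'
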